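/- (Stationarity of the discrete parabola-cone profile.) Fix J > 0 with 1/(4J) ∈ ℤ (or work with real-valued profiles on ℤ). Define K̄(x) = 1/(8J) + 2J x² for |x| ≤ 1/(4J) and K̄(x) = |x| for |x| ≥ 1/(4J). Let Θ K(x) = (K(x−1)+K(x+1))/2 and define the evolution K_{n+1}(x) = max{Θ K_n(x), |x| + 2J(n+1)} with K_0 = K̄. Then K_n(x) = K̄(x) + 2Jn for all n ≥ 0 and x ∈ ℤ. -/
import Mathlib

/-- The discrete averaging (harness) operator `ΘK(x) = (K(x−1)+K(x+1))/2`. -/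
noncomputable def harnessOp (K : ℤ → ℝ) : ℤ → ℝ :=
  fun x => (K (x - 1) + K (x + 1)) / 2

/-- The stationary parabola-cone profile:
`K̄(x) = 1/(8J) + 2Jx²` for `|x| ≤ 1/(4J)` and `K̄(x) = |x|` otherwise. -/
noncomputable def parabolaCone (J : ℝ) : ℤ → ℝ := fun x =>
  if |(x : ℝ)| ≤ 1 / (4 * J) then 1 / (8 * J) + 2 * J * (x : ℝ) ^ 2
  else |(x : ℝ)|

lemma parabolaCone_neg (J : ℝ) (x : ℤ) : parabolaCone J (-x) = parabolaCone J x := by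
  simp [parabolaCone]

lemma parabolaCone_linear (J : ℝ) (hJ : 0 < J) (m : ℤ) (hm : 4 * J * (m : ℝ) = 1)
    (y : ℤ) (hy : (m : ℝ) ≤ |(y : ℝ)|) : parabolaCone J y = |(y : ℝ)| := by
  have hinv : 1 / (4 * J) = (m : ℝ) := by field_simp; linarith
  rw [parabolaCone, hinv]
  split_ifs with h
  · have h1 : |(y : ℝ)| = (m : ℝ) := le_antisymm h hy
    have h2 : (y : ℝ) ^ 2 = (m : ℝ) ^ 2 := by rw [← sq_abs, h1]
    rw [h1, h2]
    field_simp
    nlinarith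
  · rfl

lemma key_nonneg (J : ℝ) (hJ : 0 < J) (m : ℤ) (hm : 4 * J * (m : ℝ) = 1)
    (x : ℤ) (hx : 0 ≤ x) :
    max (harnessOp (parabolaCone J) x) (|(x : ℝ)| + 2 * J) = parabolaCone J x + 2 * J := by
  have hmR : (0 : ℝ) < (m : ℝ) := by nlinarith
  have hm1 : (1 : ℤ) ≤ m := by exact_mod_cast Int.cast_pos.mp hmR
  have hinv : 1 / (4 * J) = (m : ℝ) := by field_simp; linarith
  have hPC : ∀ y : ℤ, parabolaCone J y =
      if |(y : ℝ)| ≤ (m : ℝ) then 1 / (8 * J) + 2 * J * (y : ℝ) ^ 2 else |(y : ℝ)| := by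
    intro y; rw [parabolaCone, hinv]
  rcases lt_trichotomy x m with hlt | heq | hgt
  · -- parabolic region
    have hxm : |(x : ℝ)| ≤ (m : ℝ) := by
      rw [abs_of_nonneg (by exact_mod_cast hx)]; exact_mod_cast hlt.le
    have hx1 : |((x - 1 : ℤ) : ℝ)| ≤ (m : ℝ) := by
      have : |x - 1| ≤ m := abs_le.mpr ⟨by omega, by omega⟩
      calc |((x - 1 : ℤ) : ℝ)| = ((|x - 1| : ℤ) : ℝ) := by push_cast [Int.cast_abs]; ring_nf
        _ ≤ (m : ℝ) := by exact_mod_cast this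
    have hx2 : |((x + 1 : ℤ) : ℝ)| ≤ (m : ℝ) := by
      have : |x + 1| ≤ m := abs_le.mpr ⟨by omega, by omega⟩
      calc |((x + 1 : ℤ) : ℝ)| = ((|x + 1| : ℤ) : ℝ) := by push_cast [Int.cast_abs]; ring_nf
        _ ≤ (m : ℝ) := by exact_mod_cast this
    rw [harnessOp, hPC, hPC, hPC, if_pos hx1, if_pos hx2, if_pos hxm]
    push_cast
    have hval : (1 / (8 * J) + 2 * J * ((x : ℝ) - 1) ^ 2 +
        (1 / (8 * J) + 2 * J * ((x : ℝ) + 1) ^ 2)) / 2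
        = 1 / (8 * J) + 2 * J * (x : ℝ) ^ 2 + 2 * J := by ring
    rw [hval]
    have hcone : |(x : ℝ)| + 2 * J ≤ 1 / (8 * J) + 2 * J * (x : ℝ) ^ 2 + 2 * J := by
      have h1 : 0 ≤ 2 * J * (|(x : ℝ)| - (m : ℝ)) ^ 2 := by positivity
      have h2 : (x : ℝ) ^ 2 = |(x : ℝ)| ^ 2 := (sq_abs _).symm
      have h3 : 1 / (8 * J) = (m : ℝ) / 2 := by field_simp; linarith
      rw [h3, h2]; nlinarith
    exact max_eq_left hcone
  · -- x = m : tangency point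
    subst heq
    have hxm : |(x : ℝ)| ≤ (x : ℝ) := by
      rw [abs_of_nonneg (by exact_mod_cast hx)]
    have hx1 : |((x - 1 : ℤ) : ℝ)| ≤ (x : ℝ) := by
      have : ((x : ℝ) - 1) = ((x - 1 : ℤ) : ℝ) := by push_cast; ring
      rw [← this, abs_of_nonneg (by exact_mod_cast (by omega : (0:ℤ) ≤ x - 1))]; linarith
    have hx2 : ¬ |((x + 1 : ℤ) : ℝ)| ≤ (x : ℝ) := by
      push_cast
      rw [abs_of_nonneg (by positivity)]
      linarith
    rw [harnessOp, hPC, hPC, hPC, if_pos hx1, if_neg hx2, if_pos hxm]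
    have e2 : |((x + 1 : ℤ) : ℝ)| = (x : ℝ) + 1 := by
      push_cast; rw [abs_of_nonneg (by positivity)]
    rw [abs_of_nonneg (by exact_mod_cast hx : (0:ℝ) ≤ (x:ℝ)), e2]
    push_cast
    have h3 : 1 / (8 * J) = (x : ℝ) / 2 := by field_simp; linarith
    rw [h3]
    have hv : (x : ℝ) / 2 + 2 * J * (x : ℝ) ^ 2 = (x : ℝ) := by nlinarith
    rw [hv]
    have harn : ((x : ℝ) / 2 + 2 * J * ((x : ℝ) - 1) ^ 2 + ((x : ℝ) + 1)) / 2 ≤ (x : ℝ) + 2 * J := by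
      nlinarith [hmR]
    exact max_eq_right harn
  · -- linear region
    have h1 : parabolaCone J (x - 1) = |((x - 1 : ℤ) : ℝ)| :=
      parabolaCone_linear J hJ m hm _ (by
        rw [abs_of_nonneg (by exact_mod_cast (by omega : (0:ℤ) ≤ x - 1))]
        push_cast; exact_mod_cast (by omega : (m:ℤ) ≤ x - 1))
    have h2 : parabolaCone J (x + 1) = |((x + 1 : ℤ) : ℝ)| :=
      parabolaCone_linear J hJ m hm _ (by
        rw [abs_of_nonneg (by exact_mod_cast (by omega : (0:ℤ) ≤ x + 1))]
        push_cast; exact_mod_cast (by omega : (m:ℤ) ≤ x + 1))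
    have h3 : parabolaCone J x = |(x : ℝ)| :=
      parabolaCone_linear J hJ m hm _ (by
        rw [abs_of_nonneg (by exact_mod_cast hx)]
        exact_mod_cast hgt.le)
    rw [harnessOp, h1, h2, h3]
    have e1 : |((x - 1 : ℤ) : ℝ)| = (x : ℝ) - 1 := by
      push_cast
      rw [abs_of_nonneg]
      have : (1:ℝ) ≤ (x:ℝ) := by exact_mod_cast (by omega : (1:ℤ) ≤ x)
      linarith
    have e2 : |((x + 1 : ℤ) : ℝ)| = (x : ℝ) + 1 := by
      push_cast
      rw [abs_of_nonneg (by positivity)]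
    have e3 : |(x : ℝ)| = (x : ℝ) := abs_of_nonneg (by exact_mod_cast hx)
    rw [e1, e2, e3]
    have hv : ((x : ℝ) - 1 + ((x : ℝ) + 1)) / 2 = (x : ℝ) := by ring
    rw [hv]
    exact max_eq_right (by linarith)

lemma key_all (J : ℝ) (hJ : 0 < J) (m : ℤ) (hm : 4 * J * (m : ℝ) = 1) (x : ℤ) :
    max (harnessOp (parabolaCone J) x) (|(x : ℝ)| + 2 * J) = parabolaCone J x + 2 * J := by
  rcases le_or_gt 0 x with hx | hx
  · exact key_nonneg J hJ m hm x hx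
  · have h := key_nonneg J hJ m hm (-x) (by omega)
    have e1 : harnessOp (parabolaCone J) (-x) = harnessOp (parabolaCone J) x := by
      unfold harnessOp
      rw [show -x - 1 = -(x + 1) by ring, show -x + 1 = -(x - 1) by ring,
        parabolaCone_neg, parabolaCone_neg]
      ring
    have e2 : |((-x : ℤ) : ℝ)| = |(x : ℝ)| := by push_cast; rw [abs_neg]
    rw [e1, e2, parabolaCone_neg] at h
    exact h

/-- (Stationarity of the discrete parabola-cone profile.) If `1/(4J)` is an
integer, the harness evolution with moving cone boundary
`K_{n+1}(x) = max{ΘK_n(x), |x| + 2J(n+1)}` started from `K̄` translates rigidly: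
`K_n = K̄ + 2Jn`. -/
theorem parabolaCone_stationary (J : ℝ) (hJ : 0 < J)
    (hJint : ∃ m : ℤ, 4 * J * (m : ℝ) = 1)
    (K : ℕ → ℤ → ℝ) (h0 : K 0 = parabolaCone J)
    (hrec : ∀ (n : ℕ) (x : ℤ),
      K (n + 1) x = max (harnessOp (K n) x) (|(x : ℝ)| + 2 * J * ((n : ℝ) + 1))) :
    ∀ (n : ℕ) (x : ℤ), K n x = parabolaCone J x + 2 * J * n := by
  obtain ⟨m, hm⟩ := hJint
  intro n
  induction n with
  | zero => intro x; simp [h0]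
  | succ n ih =>
    intro x
    have hh : harnessOp (K n) x = harnessOp (parabolaCone J) x + 2 * J * n := by
      unfold harnessOp; rw [ih, ih]; ring
    rw [hrec n x, hh,
      show |(x : ℝ)| + 2 * J * ((n : ℝ) + 1) = (|(x : ℝ)| + 2 * J) + 2 * J * n by ring,
      max_add_add_right, key_all J hJ m hm x]
    push_cast
    ring
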